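/- Let n, pS, pF be positive integers with p = pS + pF, p > n, p > 1. Let V be a p × p Haar-distributed orthogonal random matrix, let M = ∑_{k=1}^{n} v_k v_kᵀ (the projection onto the span of the first n columns of V), and let R = [I_{pS}, 0] ∈ ℝ^{pS×p}, R_F = [0, I_{pF}] ∈ ℝ^{pF×p}. Then E[R M R_Fᵀ R_F M Rᵀ] = (n·pF·(p−n))/((p−1)·p·(p+2)) · I_{pS}. -/

import Mathlib

/-
The law of a row `x` of a Haar orthogonal matrix is invariant under sign changes, permutations and
reflections of its coordinates. A Householder reflection mixing two coordinates, averaged over a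
sign change, gives `E[x_k⁴] = 3 E[x_k² x_l²]`, and `‖x‖ = 1` then fixes both moments:
`E[(∑_{k ∈ s} x_k²)²] = |s|(|s|+2)/(p(p+2))`.

For the projection `P = V D Vᵀ` onto the columns in `s`, a sign change of row `a` gives
`E[P_ac P_cb] = 0` for `a ≠ b`. Since `P² = P` is symmetric, `∑_c P_ac² = P_aa`, and
`E[P_ac²]` does not depend on `c ≠ a`, so it equals
`(E[P_aa] - E[P_aa²])/(p-1) = |s|(p-|s|)/((p-1)p(p+2))`. The `(i, j)` entry in the theorem is
the sum of `E[P_ic P_cj]` over the `pF` indices `c` of the second block.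
-/

open MeasureTheory Matrix

instance matrixMeasurableSpace (m n : Type*) : MeasurableSpace (Matrix m n ℝ) :=
  inferInstanceAs (MeasurableSpace (m → n → ℝ))

instance Matrix.borelSpace {m n : Type*} [Fintype m] [Fintype n] : BorelSpace (Matrix m n ℝ) :=
  inferInstanceAs (BorelSpace (m → n → ℝ))

theorem Continuous.integrable_of_compactSpace {X : Type*} [TopologicalSpace X] [CompactSpace X]
    [MeasurableSpace X] [OpensMeasurableSpace X] {μ : Measure X} [IsFiniteMeasure μ]
    {f : X → ℝ} (hf : Continuous f) : Integrable f μ :=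
  hf.integrable_of_hasCompactSupport (.of_compactSpace f)

theorem Finset.sum_sum_ite_eq_const {α : Type*} [DecidableEq α] (s : Finset α) (a b : ℝ) :
    ∑ k ∈ s, ∑ l ∈ s, (if k = l then a else b) = s.card * (a + (s.card - 1) * b) := by
  have h : ∀ k l : α, (if k = l then a else b) = b + if k = l then a - b else 0 := by
    intro k l; split_ifs <;> ring
  simp only [h, Finset.sum_add_distrib, Finset.sum_ite_eq, Finset.sum_const, nsmul_eq_mul,
    Finset.sum_ite_mem, Finset.inter_self]
  ring

namespace Matrix

variable {ι : Type*} [Fintype ι] [DecidableEq ι]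

theorem isCompact_orthogonalGroup : IsCompact (orthogonalGroup ι ℝ : Set (Matrix ι ι ℝ)) := by
  have hclosed : IsClosed (orthogonalGroup ι ℝ : Set (Matrix ι ι ℝ)) := by
    have : (orthogonalGroup ι ℝ : Set (Matrix ι ι ℝ)) = (fun U => U * Uᵀ) ⁻¹' {1} := by
      ext U; exact mem_orthogonalGroup_iff ι ℝ
    rw [this]
    exact isClosed_singleton.preimage (by fun_prop)
  refine (isCompact_univ_pi fun _ => isCompact_univ_pi fun _ =>
    isCompact_closedBall (0 : ℝ) 1).of_isClosed_subset hclosed fun U hU i _ j _ => ?_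
  simpa using entry_norm_bound_of_unitary hU i j

instance : CompactSpace (orthogonalGroup ι ℝ) :=
  isCompact_iff_compactSpace.mp isCompact_orthogonalGroup

theorem sum_sq_row_of_mem_orthogonalGroup {V : Matrix ι ι ℝ} (hV : V ∈ orthogonalGroup ι ℝ)
    (i : ι) : ∑ k, V i k ^ 2 = 1 := by
  simpa [mul_apply, sq] using congrFun (congrFun ((mem_orthogonalGroup_iff ι ℝ).mp hV) i) i

theorem submatrix_one_mem_orthogonalGroup (σ : ι ≃ ι) :
    (1 : Matrix ι ι ℝ).submatrix σ id ∈ orthogonalGroup ι ℝ := by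
  rw [mem_orthogonalGroup_iff, transpose_submatrix, transpose_one]
  exact (submatrix_mul_equiv 1 1 σ (Equiv.refl ι) σ).trans (by simp)

theorem diagonal_mem_orthogonalGroup {d : ι → ℝ} (hd : ∀ a, d a * d a = 1) :
    diagonal d ∈ orthogonalGroup ι ℝ := by
  rw [mem_orthogonalGroup_iff, diagonal_transpose, diagonal_mul_diagonal]
  simp [hd]

def householder (u : ι → ℝ) : Matrix ι ι ℝ := 1 - (2 : ℝ) • vecMulVec u u

theorem householder_mem_orthogonalGroup {u : ι → ℝ} (hu : u ⬝ᵥ u = 1) :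
    householder u ∈ orthogonalGroup ι ℝ := by
  have hsq : vecMulVec u u * vecMulVec u u = vecMulVec u u := by
    rw [vecMulVec_mul_vecMulVec, hu, one_smul]
  rw [mem_orthogonalGroup_iff, householder, transpose_sub, transpose_smul, transpose_one,
    transpose_vecMulVec]
  simp only [sub_mul, mul_sub, smul_mul_smul_comm, hsq, mul_one, one_mul, mul_smul]
  module

theorem mul_householder_apply (A : Matrix ι ι ℝ) (u : ι → ℝ) (i k : ι) :
    (A * householder u) i k = A i k - 2 * (A *ᵥ u) i * u k := by
  rw [householder, Matrix.mul_sub, Matrix.mul_one, Matrix.mul_smul]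
  simp only [Matrix.sub_apply, Matrix.smul_apply, mul_apply, vecMulVec_apply, mulVec, dotProduct,
    Finset.sum_mul, smul_eq_mul, mul_assoc]

theorem mul_mul_transpose_eq_submatrix {m n : Type*} {R : Matrix m ι ℝ} {S : Matrix n ι ℝ}
    {e : m → ι} {f : n → ι} (hR : ∀ a b, R a b = if b = e a then 1 else 0)
    (hS : ∀ a b, S a b = if b = f a then 1 else 0) (X : Matrix ι ι ℝ) :
    R * X * Sᵀ = X.submatrix e f := by
  ext a b
  simp [mul_apply, hR, hS]

def columnProjection (s : Finset ι) (V : Matrix ι ι ℝ) : Matrix ι ι ℝ :=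
  V * diagonal (fun k => if k ∈ s then 1 else 0) * Vᵀ

section ColumnProjection

variable (s : Finset ι)

theorem columnProjection_apply (V : Matrix ι ι ℝ) (a b : ι) :
    columnProjection s V a b = ∑ k ∈ s, V a k * V b k := by
  rw [columnProjection, mul_apply]
  simp only [mul_diagonal, transpose_apply, mul_ite, mul_one, mul_zero, ite_mul, zero_mul,
    Finset.sum_ite_mem, Finset.univ_inter]

theorem columnProjection_mul_self {V : Matrix ι ι ℝ} (hV : V ∈ orthogonalGroup ι ℝ) :
    columnProjection s V * columnProjection s V = columnProjection s V := by
  have hVV : Vᵀ * V = 1 := (mem_orthogonalGroup_iff' ι ℝ).mp hV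
  simp only [columnProjection, Matrix.mul_assoc]
  rw [← Matrix.mul_assoc Vᵀ V, hVV, Matrix.one_mul, ← Matrix.mul_assoc (diagonal _),
    diagonal_mul_diagonal]
  congr 3
  ext k
  split_ifs <;> simp

theorem columnProjection_comm (V : Matrix ι ι ℝ) (a b : ι) :
    columnProjection s V a b = columnProjection s V b a := by
  simp only [columnProjection_apply, mul_comm]

theorem columnProjection_submatrix_left (V : Matrix ι ι ℝ) (σ : ι → ι) :
    columnProjection s (V.submatrix σ id) = (columnProjection s V).submatrix σ σ := by
  ext a b
  simp [columnProjection_apply]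

theorem columnProjection_diagonal_mul (V : Matrix ι ι ℝ) (d : ι → ℝ) (a b : ι) :
    columnProjection s (diagonal d * V) a b = d a * d b * columnProjection s V a b := by
  simp only [columnProjection_apply, diagonal_mul, Finset.mul_sum]
  exact Finset.sum_congr rfl fun _ _ => by ring

end ColumnProjection

variable (μ : Measure (orthogonalGroup ι ℝ))

@[fun_prop]
theorem continuous_orthogonalGroup_apply (i j : ι) :
    Continuous fun V : orthogonalGroup ι ℝ => V.1 i j :=
  continuous_subtype_val.matrix_elem i j

section RightInvariant

variable [μ.IsMulRightInvariant]

theorem integral_comp_mul_right_orthogonalGroup (f : Matrix ι ι ℝ → ℝ) {g : Matrix ι ι ℝ}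
    (hg : g ∈ orthogonalGroup ι ℝ) : ∫ V, f (V.1 * g) ∂μ = ∫ V, f V ∂μ :=
  integral_mul_right_eq_self (fun V : orthogonalGroup ι ℝ => f V) ⟨g, hg⟩

theorem integral_comp_submatrix_right (f : Matrix ι ι ℝ → ℝ) (σ : ι ≃ ι) :
    ∫ V, f (V.1.submatrix id σ) ∂μ = ∫ V, f V ∂μ := by
  simpa [mul_submatrix_one] using
    integral_comp_mul_right_orthogonalGroup μ f (submatrix_one_mem_orthogonalGroup σ.symm)

theorem integral_entry_pow_eq (i k k' : ι) (m : ℕ) :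
    ∫ V, V.1 i k ^ m ∂μ = ∫ V, V.1 i k' ^ m ∂μ := by
  simpa using integral_comp_submatrix_right μ (fun W => W i k' ^ m) (Equiv.swap k k')

variable [IsProbabilityMeasure μ]

theorem integral_sum_entry_sq (i : ι) (s : Finset ι) :
    ∫ V, ∑ k ∈ s, V.1 i k ^ 2 ∂μ = s.card / Fintype.card ι := by
  have hrow : (Fintype.card ι : ℝ) * ∫ V, V.1 i i ^ 2 ∂μ = 1 := by
    have h := integral_finsetSum (μ := μ) (f := fun k V => V.1 i k ^ 2) Finset.univ fun k _ =>
      Continuous.integrable_of_compactSpace (by fun_prop)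
    simp only [sum_sq_row_of_mem_orthogonalGroup (Subtype.prop _), integral_const, probReal_univ,
      one_smul, integral_entry_pow_eq μ i _ i, Finset.sum_const, Finset.card_univ,
      nsmul_eq_mul] at h
    exact h.symm
  have : Nonempty ι := ⟨i⟩
  have hcard : (Fintype.card ι : ℝ) ≠ 0 := Nat.cast_ne_zero.mpr Fintype.card_ne_zero
  rw [integral_finsetSum _ fun k _ => Continuous.integrable_of_compactSpace (by fun_prop)]
  simp only [integral_entry_pow_eq μ i _ i, Finset.sum_const, nsmul_eq_mul]
  field_simp
  linear_combination (s.card : ℝ) * hrow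

theorem integral_entry_pow_four_eq_three_mul {i k l : ι} (hkl : k ≠ l) :
    ∫ V, V.1 i k ^ 4 ∂μ = 3 * ∫ V, V.1 i k ^ 2 * V.1 i l ^ 2 ∂μ := by
  -- Any reflection mixing columns `k` and `l` would do; `(3/5, 4/5)` keeps the coefficients
  -- rational. Flipping the sign of column `l` as well cancels the odd moments.
  set u : ι → ℝ := Pi.single k (3 / 5) + Pi.single l (4 / 5)
  have hu : u ⬝ᵥ u = 1 := by norm_num [u, hkl, hkl.symm]
  have hH : ∀ W : Matrix ι ι ℝ, (W * householder u) i k = 7 / 25 * W i k - 24 / 25 * W i l := by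
    intro W
    rw [mul_householder_apply]
    norm_num [u, mulVec_add, mulVec_single, hkl]
    ring
  set d : ι → ℝ := fun a => if a = l then -1 else 1
  have hd : ∀ a, d a * d a = 1 := fun a => by simp only [d]; split_ifs <;> norm_num
  have hreflect := integral_comp_mul_right_orthogonalGroup μ (fun W => W i k ^ 4)
    (householder_mem_orthogonalGroup hu)
  have hflip := integral_comp_mul_right_orthogonalGroup μ (fun W => (W * householder u) i k ^ 4)
    (diagonal_mem_orthogonalGroup hd)
  simp only [hH, mul_diagonal, d, if_neg hkl, if_pos, mul_one, mul_neg, sub_neg_eq_add]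
    at hreflect hflip
  have hexpand : ∫ V, (7 / 25 * V.1 i k - 24 / 25 * V.1 i l) ^ 4 ∂μ
        + ∫ V, (7 / 25 * V.1 i k + 24 / 25 * V.1 i l) ^ 4 ∂μ
      = 4802 / 390625 * ∫ V, V.1 i k ^ 4 ∂μ
        + 338688 / 390625 * ∫ V, V.1 i k ^ 2 * V.1 i l ^ 2 ∂μ
        + 663552 / 390625 * ∫ V, V.1 i l ^ 4 ∂μ := by
    rw [← integral_add, ← integral_const_mul, ← integral_const_mul, ← integral_const_mul,
      ← integral_add, ← integral_add]
    · congr 1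
      ext V
      ring
    all_goals exact Continuous.integrable_of_compactSpace (by fun_prop)
  rw [hflip, hreflect, integral_entry_pow_eq μ i l k] at hexpand
  linarith

theorem integral_entry_sq_mul_entry_sq (i k l : ι) :
    ∫ V, V.1 i k ^ 2 * V.1 i l ^ 2 ∂μ
      = if k = l then ∫ V, V.1 i i ^ 4 ∂μ else (∫ V, V.1 i i ^ 4 ∂μ) / 3 := by
  split_ifs with hkl
  · rw [hkl, ← integral_entry_pow_eq μ i l i 4]
    simp_rw [← pow_add]
  · rw [← integral_entry_pow_eq μ i k i 4, integral_entry_pow_four_eq_three_mul μ hkl]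
    ring

theorem integral_sq_sum_entry_sq_eq_mul (i : ι) (s : Finset ι) :
    ∫ V, (∑ k ∈ s, V.1 i k ^ 2) ^ 2 ∂μ = s.card * (s.card + 2) / 3 * ∫ V, V.1 i i ^ 4 ∂μ := by
  have hexpand : ∀ V : orthogonalGroup ι ℝ,
      (∑ k ∈ s, V.1 i k ^ 2) ^ 2 = ∑ k ∈ s, ∑ l ∈ s, V.1 i k ^ 2 * V.1 i l ^ 2 :=
    fun V => by rw [sq, Finset.sum_mul_sum]
  have hinner : ∀ k, ∫ V, ∑ l ∈ s, V.1 i k ^ 2 * V.1 i l ^ 2 ∂μ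
      = ∑ l ∈ s, ∫ V, V.1 i k ^ 2 * V.1 i l ^ 2 ∂μ := fun k =>
    integral_finsetSum s fun l _ => Continuous.integrable_of_compactSpace (by fun_prop)
  simp_rw [hexpand]
  rw [integral_finsetSum _ fun k _ => Continuous.integrable_of_compactSpace (by fun_prop)]
  simp_rw [hinner, integral_entry_sq_mul_entry_sq μ i, Finset.sum_sum_ite_eq_const]
  ring

theorem integral_sq_sum_entry_sq (i : ι) (s : Finset ι) :
    ∫ V, (∑ k ∈ s, V.1 i k ^ 2) ^ 2 ∂μ
      = s.card * (s.card + 2) / (Fintype.card ι * (Fintype.card ι + 2)) := by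
  have : Nonempty ι := ⟨i⟩
  have hrow := integral_sq_sum_entry_sq_eq_mul μ i Finset.univ
  simp only [sum_sq_row_of_mem_orthogonalGroup (Subtype.prop _), one_pow, integral_const,
    probReal_univ, one_smul, Finset.card_univ] at hrow
  rw [integral_sq_sum_entry_sq_eq_mul, eq_div_iff (by positivity)]
  linear_combination -(s.card : ℝ) * (s.card + 2) * hrow

end RightInvariant

section LeftInvariant

variable [μ.IsMulLeftInvariant] (s : Finset ι)

@[fun_prop]
theorem continuous_columnProjection_apply (a b : ι) :
    Continuous fun V : orthogonalGroup ι ℝ => columnProjection s V.1 a b := by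
  simp only [columnProjection_apply]
  fun_prop

theorem integral_comp_mul_left_orthogonalGroup (f : Matrix ι ι ℝ → ℝ) {g : Matrix ι ι ℝ}
    (hg : g ∈ orthogonalGroup ι ℝ) : ∫ V, f (g * V.1) ∂μ = ∫ V, f V ∂μ :=
  integral_mul_left_eq_self (fun V : orthogonalGroup ι ℝ => f V) ⟨g, hg⟩

theorem integral_comp_submatrix_left (f : Matrix ι ι ℝ → ℝ) (σ : ι ≃ ι) :
    ∫ V, f (V.1.submatrix σ id) ∂μ = ∫ V, f V ∂μ := by
  have hperm : ∀ W : Matrix ι ι ℝ, (1 : Matrix ι ι ℝ).submatrix σ id * W = W.submatrix σ id :=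
    fun W => by simpa using one_submatrix_mul σ (Equiv.refl ι) W
  simpa [hperm] using
    integral_comp_mul_left_orthogonalGroup μ f (submatrix_one_mem_orthogonalGroup σ)

theorem integral_columnProjection_mul_eq_zero {x y : ι} (hxy : x ≠ y) (c : ι) :
    ∫ V, columnProjection s V.1 x c * columnProjection s V.1 c y ∂μ = 0 := by
  set d : ι → ℝ := fun a => if a = x then -1 else 1
  have hd : ∀ a, d a * d a = 1 := fun a => by simp only [d]; split_ifs <;> norm_num
  have h := integral_comp_mul_left_orthogonalGroup μ
    (fun W => columnProjection s W x c * columnProjection s W c y) (diagonal_mem_orthogonalGroup hd)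
  have hodd : ∀ V : orthogonalGroup ι ℝ,
      columnProjection s (diagonal d * V.1) x c * columnProjection s (diagonal d * V.1) c y
        = -(columnProjection s V.1 x c * columnProjection s V.1 c y) := fun V => by
    simp only [columnProjection_diagonal_mul]
    have hdc := hd c
    simp only [d, if_pos rfl, if_neg hxy.symm] at hdc ⊢
    linear_combination -(columnProjection s V.1 x c * columnProjection s V.1 c y) * hdc
  simp only [hodd, integral_neg] at h
  linarith

theorem integral_columnProjection_sq_eq {x c c' : ι} (hc : c ≠ x) (hc' : c' ≠ x) :
    ∫ V, columnProjection s V.1 x c ^ 2 ∂μ = ∫ V, columnProjection s V.1 x c' ^ 2 ∂μ := by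
  have h := integral_comp_submatrix_left μ (fun W => columnProjection s W x c' ^ 2)
    (Equiv.swap c c')
  simpa [columnProjection_submatrix_left, Equiv.swap_apply_of_ne_of_ne hc.symm hc'.symm] using h

end LeftInvariant

variable [μ.IsMulLeftInvariant] [μ.IsMulRightInvariant] [IsProbabilityMeasure μ] (s : Finset ι)

theorem integral_columnProjection_sq_of_ne {x c : ι} (hcx : c ≠ x) :
    ∫ V, columnProjection s V.1 x c ^ 2 ∂μ
      = s.card * (Fintype.card ι - s.card)
          / ((Fintype.card ι - 1) * Fintype.card ι * (Fintype.card ι + 2)) := by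
  have : Nonempty ι := ⟨x⟩
  have hrow : ∀ V : orthogonalGroup ι ℝ,
      ∑ c', columnProjection s V.1 x c' ^ 2 = ∑ k ∈ s, V.1 x k ^ 2 := fun V => by
    have h := congrFun (congrFun (columnProjection_mul_self s V.2) x) x
    simp only [mul_apply, columnProjection_comm s _ _ x] at h
    simpa [sq, columnProjection_apply] using h
  have hsplit : ∫ V, ∑ c', columnProjection s V.1 x c' ^ 2 ∂μ
      = ∫ V, (∑ k ∈ s, V.1 x k ^ 2) ^ 2 ∂μ
        + (Fintype.card ι - 1) * ∫ V, columnProjection s V.1 x c ^ 2 ∂μ := by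
    rw [integral_finsetSum _ fun c' _ => Continuous.integrable_of_compactSpace (by fun_prop),
      ← Finset.add_sum_erase _ _ (Finset.mem_univ x),
      Finset.sum_congr rfl fun c' hc' => integral_columnProjection_sq_eq μ s
        (Finset.ne_of_mem_erase hc') hcx]
    congr 1
    · simp only [columnProjection_apply, sq]
    · rw [Finset.sum_const, Finset.card_erase_of_mem (Finset.mem_univ x), Finset.card_univ,
        nsmul_eq_mul, Nat.cast_sub Fintype.card_pos, Nat.cast_one]
  have htotal := integral_sum_entry_sq μ x s
  simp_rw [← hrow, hsplit, integral_sq_sum_entry_sq] at htotal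
  have hp : (1 : ℝ) < Fintype.card ι := Nat.one_lt_cast.mpr (Fintype.one_lt_card_iff.mpr ⟨c, x, hcx⟩)
  rw [eq_div_iff (by positivity)]
  field_simp at htotal
  linear_combination htotal

theorem integral_columnProjection_mul_columnProjection {x y c : ι} (hcx : c ≠ x) :
    ∫ V, columnProjection s V.1 x c * columnProjection s V.1 c y ∂μ
      = if x = y then (s.card : ℝ) * (Fintype.card ι - s.card)
          / ((Fintype.card ι - 1) * Fintype.card ι * (Fintype.card ι + 2)) else 0 := by
  split_ifs with hxy
  · subst hxy
    simp_rw [columnProjection_comm s _ c x, ← sq]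
    exact integral_columnProjection_sq_of_ne μ s hcx
  · exact integral_columnProjection_mul_eq_zero μ s hxy c

end Matrix

theorem stmt18_general (n pS pF : ℕ)
    (p : ℕ) (hp : p = pS + pF) (hnp : n < p)
    (μ : Measure ↥(Matrix.orthogonalGroup (Fin p) ℝ)) [IsProbabilityMeasure μ]
    (hleft : ∀ g : ↥(Matrix.orthogonalGroup (Fin p) ℝ),
      μ.map (fun V => g * V) = μ)
    (hright : ∀ g : ↥(Matrix.orthogonalGroup (Fin p) ℝ),
      μ.map (fun V => V * g) = μ)
    (R : Matrix (Fin pS) (Fin p) ℝ)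
    (hR : ∀ (a : Fin pS) (b : Fin p), R a b = if (b : ℕ) = (a : ℕ) then 1 else 0)
    (RF : Matrix (Fin pF) (Fin p) ℝ)
    (hRF : ∀ (a : Fin pF) (b : Fin p), RF a b = if (b : ℕ) = pS + (a : ℕ) then 1 else 0)
    (M : ↥(Matrix.orthogonalGroup (Fin p) ℝ) → Matrix (Fin p) (Fin p) ℝ)
    (hM : ∀ V, M V = ∑ k : Fin n,
      Matrix.vecMulVec (fun a => (V : Matrix (Fin p) (Fin p) ℝ) a (Fin.castLE hnp.le k))
        (fun a => (V : Matrix (Fin p) (Fin p) ℝ) a (Fin.castLE hnp.le k)))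
    (i j : Fin pS) :
    ∫ V, (R * M V * RFᵀ * RF * M V * Rᵀ) i j ∂μ
      = ((n : ℝ) * pF * ((p : ℝ) - n)) / (((p : ℝ) - 1) * (p : ℝ) * ((p : ℝ) + 2))
          * (1 : Matrix (Fin pS) (Fin pS) ℝ) i j := by
  have : μ.IsMulLeftInvariant := ⟨hleft⟩
  have : μ.IsMulRightInvariant := ⟨hright⟩
  set s : Finset (Fin p) := Finset.univ.map (Fin.castLEEmb hnp.le)
  have hMs : ∀ V, M V = columnProjection s V := fun V => by
    ext a b
    simp [hM, columnProjection_apply, s, Matrix.sum_apply, vecMulVec_apply]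
  let e : Fin pS → Fin p := Fin.castLE (by omega)
  let f : Fin pF → Fin p := fun d => ⟨pS + d, by omega⟩
  have hRe : ∀ a b, R a b = if b = e a then 1 else 0 := fun a b => by
    simp [hR, Fin.ext_iff, e]
  have hRFf : ∀ a b, RF a b = if b = f a then 1 else 0 := fun a b => by
    simp [hRF, Fin.ext_iff, f]
  have hentry : ∀ X : Matrix (Fin p) (Fin p) ℝ,
      (R * X * RFᵀ * RF * X * Rᵀ) i j = ∑ d, X (e i) (f d) * X (f d) (e j) := fun X => by
    rw [show R * X * RFᵀ * RF * X * Rᵀ = (R * X * RFᵀ) * (RF * X * Rᵀ) by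
        simp only [Matrix.mul_assoc],
      mul_mul_transpose_eq_submatrix hRe hRFf, mul_mul_transpose_eq_submatrix hRFf hRe, mul_apply]
    rfl
  have hfe : ∀ d, f d ≠ e i := fun d => Fin.ne_of_val_ne (by simp only [Fin.val_castLE, e, f]; omega)
  simp_rw [hentry, hMs]
  rw [integral_finsetSum _ fun d _ => Continuous.integrable_of_compactSpace (by fun_prop)]
  simp_rw [integral_columnProjection_mul_columnProjection μ s (hfe _)]
  have hs : s.card = n := by simp [s]
  simp only [Finset.sum_const, Finset.card_univ, Fintype.card_fin, hs, one_apply, nsmul_eq_mul,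
    e, Fin.castLE_inj]
  split_ifs <;> ring

/-- Lemma 2, second claim (Haar SVD reduction): with `M = ∑_{k<n} v_k v_kᵀ` for a
Haar-distributed `p × p` orthogonal matrix `V`, `R = [I_{pS}, 0]`, `R_F = [0, I_{pF}]`,
`E[R M R_Fᵀ R_F M Rᵀ] = n·pF·(p−n)/((p−1)p(p+2)) · I_{pS}` (entrywise). -/
theorem stmt18 (n pS pF : ℕ) (hn : 0 < n) (hpS : 0 < pS) (hpF : 0 < pF)
    (p : ℕ) (hp : p = pS + pF) (hnp : n < p) (hp1 : 1 < p)
    (μ : Measure ↥(Matrix.orthogonalGroup (Fin p) ℝ)) [IsProbabilityMeasure μ]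
    (hleft : ∀ g : ↥(Matrix.orthogonalGroup (Fin p) ℝ),
      μ.map (fun V => g * V) = μ)
    (hright : ∀ g : ↥(Matrix.orthogonalGroup (Fin p) ℝ),
      μ.map (fun V => V * g) = μ)
    (R : Matrix (Fin pS) (Fin p) ℝ)
    (hR : ∀ (a : Fin pS) (b : Fin p), R a b = if (b : ℕ) = (a : ℕ) then 1 else 0)
    (RF : Matrix (Fin pF) (Fin p) ℝ)
    (hRF : ∀ (a : Fin pF) (b : Fin p), RF a b = if (b : ℕ) = pS + (a : ℕ) then 1 else 0)
    (M : ↥(Matrix.orthogonalGroup (Fin p) ℝ) → Matrix (Fin p) (Fin p) ℝ)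
    (hM : ∀ V, M V = ∑ k : Fin n,
      Matrix.vecMulVec (fun a => (V : Matrix (Fin p) (Fin p) ℝ) a (Fin.castLE hnp.le k))
        (fun a => (V : Matrix (Fin p) (Fin p) ℝ) a (Fin.castLE hnp.le k)))
    (i j : Fin pS) :
    ∫ V, (R * M V * RFᵀ * RF * M V * Rᵀ) i j ∂μ
      = ((n : ℝ) * pF * ((p : ℝ) - n)) / (((p : ℝ) - 1) * (p : ℝ) * ((p : ℝ) + 2))
          * (1 : Matrix (Fin pS) (Fin pS) ℝ) i j :=
  stmt18_general n pS pF p hp hnp μ hleft hright R hR RF hRF M hM i j
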